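/- Let R be a commutative ring, let M be an R-module, let A be an m × n matrix with entries in R, and let b ∈ M^m. If the system Ax = b has no constant solution (i.e. there is no y ∈ M with A applied to (y, y, …, y) equal to b), then there exists a finite colouring of M such that no vector x ∈ M^n with all entries of the same colour satisfies Ax = b. -/

import Mathlib

/-!
A character `χ : M^m → ℝ/ℤ` vanishes on the subgroup of constant right-hand sides but not on `b`.
With `u_j z = χ (A_{·j} z)`, every `z` has `∑ⱼ u_j z = 0`, while every solution `x` has
`∑ⱼ u_j (x_j) = χ b ≠ 0`. Colour `z` by which cell of a fine finite cover of the compact circle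
contains each `u_j z`. For a monochromatic `x`, each `u_j (x_j)` is `ε`-close to `u_j (x_0)`, so
`χ b` is within `n ε` of `∑ⱼ u_j (x_0) = 0`, which is impossible once `n ε < ‖χ b‖`.
-/

open Metric in
theorem TotallyBounded.exists_finite_colouring_dist_lt {X : Type*} [PseudoMetricSpace X]
    (hX : TotallyBounded (Set.univ : Set X)) {ε : ℝ} (hε : 0 < ε) :
    ∃ (κ : Set X) (_ : Finite κ) (c : X → κ), ∀ x y, c x = c y → dist x y < ε := by
  obtain ⟨t, -, ht, hcover⟩ := finite_approx_of_totallyBounded hX (ε / 2) (half_pos hε)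
  have hcentre : ∀ x, ∃ y ∈ t, dist x y < ε / 2 := fun x => by
    simpa using hcover (Set.mem_univ x)
  choose c hct hc using hcentre
  refine ⟨t, ht.to_subtype, fun x => ⟨c x, hct x⟩, fun x y hxy => ?_⟩
  have hxy : c x = c y := congrArg Subtype.val hxy
  calc dist x y ≤ dist x (c x) + dist y (c y) := by rw [hxy]; exact dist_triangle_right _ _ _
    _ < ε / 2 + ε / 2 := add_lt_add (hc x) (hc y)
    _ = ε := add_halves ε

universe u v

theorem exists_finite_colouring_forall_sum_ne {M : Type*} {ι : Type u} {G : Type v} [Fintype ι]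
    [SeminormedAddCommGroup G] (hG : TotallyBounded (Set.univ : Set G)) (u : ι → M → G)
    (hu : ∀ z, ∑ j, u j z = 0) {γ : G} (hγ : 0 < ‖γ‖) :
    ∃ (κ : Type (max u v)) (_ : Finite κ) (c : M → κ),
      ∀ x : ι → M, (∀ i j, c (x i) = c (x j)) → ∑ j, u j (x j) ≠ γ := by
  set ε := ‖γ‖ / (Fintype.card ι + 1)
  obtain ⟨κ, _, col, hcol⟩ := hG.exists_finite_colouring_dist_lt (ε := ε) (by positivity)
  refine ⟨ι → κ, inferInstance, fun z j => col (u j z), fun x hx hsum => ?_⟩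
  rcases isEmpty_or_nonempty ι with _ | ⟨⟨i₀⟩⟩
  · simp [← hsum] at hγ
  have hclose : ∀ j ∈ Finset.univ, dist (u j (x j)) (u j (x i₀)) ≤ ε :=
    fun j _ => (hcol _ _ (congrFun (hx j i₀) j)).le
  have hγle : ‖γ‖ ≤ Fintype.card ι * ε := by
    simpa [hsum, hu] using dist_sum_sum_le_of_le Finset.univ hclose
  have hlt : (Fintype.card ι : ℝ) * ε < ‖γ‖ := by
    rw [mul_div_assoc', div_lt_iff₀ (by positivity)]
    nlinarith
  linarith

-- Mathlib's characters take values in the non-compact `ℚ/ℤ`; the covering argument needs `ℝ/ℤ`.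
noncomputable def AddCircle.ratToReal : AddCircle (1 : ℚ) →+ AddCircle (1 : ℝ) :=
  QuotientAddGroup.map _ _ (Rat.castHom ℝ).toAddMonoidHom <| by
    rintro _ ⟨k, rfl⟩
    exact ⟨k, by simp⟩

theorem AddCircle.ratToReal_injective : Function.Injective AddCircle.ratToReal := by
  refine (injective_iff_map_eq_zero _).2 fun v hv => ?_
  induction v using QuotientAddGroup.induction_on with
  | H q =>
    obtain ⟨k, hk⟩ := (AddCircle.coe_eq_zero_iff (1 : ℝ)).1 hv
    refine (AddCircle.coe_eq_zero_iff (1 : ℚ)).2 ⟨k, ?_⟩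
    have hk' : ((k : ℚ) : ℝ) = q := by simpa using hk
    simpa using Rat.cast_injective hk'

theorem AddSubgroup.exists_addMonoidHom_addCircle_of_notMem {P : Type*} [AddCommGroup P]
    (H : AddSubgroup P) {b : P} (hb : b ∉ H) :
    ∃ χ : P →+ AddCircle (1 : ℝ), (∀ y ∈ H, χ y = 0) ∧ χ b ≠ 0 := by
  have hb' : (b : P ⧸ H) ≠ 0 := by simpa using hb
  obtain ⟨χ, hχ⟩ := CharacterModule.exists_character_apply_ne_zero_of_ne_zero hb'
  refine ⟨AddCircle.ratToReal.comp (χ.comp (QuotientAddGroup.mk' H)), fun y hy => ?_, ?_⟩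
  · change AddCircle.ratToReal (χ (y : P ⧸ H)) = 0
    rw [(QuotientAddGroup.eq_zero_iff y).2 hy, map_zero, map_zero]
  · exact AddCircle.ratToReal_injective.ne_iff' (map_zero _) |>.2 hχ

/-- If the system `Ax = b` (with `A` an `m × n` matrix over a commutative ring `R`, acting
on an `R`-module `M`, and `b ∈ M^m`) has no constant solution, then there is a finite
colouring of `M` with no monochromatic solution. -/
theorem exists_bad_colouring_module {R : Type*} [CommRing R] {M : Type*} [AddCommGroup M]
    [Module R M] {m n : ℕ} (A : Matrix (Fin m) (Fin n) R) (b : Fin m → M)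
    (h : ¬ ∃ y : M, (fun i => ∑ j : Fin n, A i j • y) = b) :
    ∃ (κ : Type) (_ : Finite κ) (c : M → κ),
      ¬ ∃ x : Fin n → M, (∀ i j : Fin n, c (x i) = c (x j)) ∧
        (fun i => ∑ j : Fin n, A i j • x j) = b := by
  let constSystem : M →+ (Fin m → M) :=
    AddMonoidHom.mk' (fun y i => ∑ j, A i j • y) fun y z => by
      ext i; simp [smul_add, Finset.sum_add_distrib]
  obtain ⟨χ, hχ, hχb⟩ := constSystem.range.exists_addMonoidHom_addCircle_of_notMem
    (b := b) fun ⟨y, hy⟩ => h ⟨y, hy⟩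
  have hχsum : ∀ x : Fin n → M,
      ∑ j, χ (fun i => A i j • x j) = χ (fun i => ∑ j, A i j • x j) := fun x => by
    rw [← map_sum]; congr 1; ext i; simp [Finset.sum_apply]
  obtain ⟨κ, hκ, c, hc⟩ := exists_finite_colouring_forall_sum_ne isCompact_univ.totallyBounded
    (fun j z => χ (fun i => A i j • z))
    (fun z => by rw [hχsum]; exact hχ _ ⟨z, rfl⟩) (norm_pos_iff.2 hχb)
  exact ⟨κ, hκ, c, fun ⟨x, hmono, hx⟩ => hc x hmono (by rw [hχsum, hx])⟩
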